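/- arXiv:2408.02109 — 2 statements merged into one kernel-verified Lean document; each statement's English description precedes it below -/
import Mathlib

section
/- Let $\{\nu_m\}_{m\geq 1}$ be a positive decreasing sequence with $\nu_1 = 1$, let $N \geq 1$ and $d \geq 1$ be integers, and define $m_* := \min\{m \in \mathbb{N} : \nu_m \leq \sqrt{m^d/N}\}$ and $\varepsilon_* := \sup_{m \in \mathbb{N}} \min\{\nu_m, \sqrt{m^d/N}\}$. Then $\varepsilon_* \leq \sqrt{m_*^d/N} \leq 2^{d/2} \varepsilon_*$. -/
theorem epsstar_two_sided (ν : ℕ → ℝ) (hpos : ∀ m, 1 ≤ m → 0 < ν m)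
    (hdec : ∀ m, 1 ≤ m → ν (m + 1) ≤ ν m) (hν1 : ν 1 = 1)
    (N d : ℕ) (hN : 1 ≤ N) (hd : 1 ≤ d)
    (mstar : ℕ)
    (hmstar : mstar = sInf {m : ℕ | 1 ≤ m ∧ ν m ≤ Real.sqrt ((m : ℝ) ^ d / N)})
    (epsstar : ℝ)
    (hepsstar : epsstar
      = sSup {e : ℝ | ∃ m : ℕ, 1 ≤ m ∧ e = min (ν m) (Real.sqrt ((m : ℝ) ^ d / N))}) :
    epsstar ≤ Real.sqrt ((mstar : ℝ) ^ d / N) ∧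
      Real.sqrt ((mstar : ℝ) ^ d / N) ≤ (2 : ℝ) ^ ((d : ℝ) / 2) * epsstar := by
  set f : ℕ → ℝ := fun m => Real.sqrt ((m : ℝ) ^ d / N) with hf
  have hNpos : (0:ℝ) < N := by exact_mod_cast hN
  have hfmono : ∀ a b : ℕ, a ≤ b → f a ≤ f b := by
    intro a b hab
    apply Real.sqrt_le_sqrt
    have : (a:ℝ) ≤ b := by exact_mod_cast hab
    gcongr
  have hanti : ∀ a b : ℕ, 1 ≤ a → a ≤ b → ν b ≤ ν a := by
    intro a b ha hab
    induction b, hab using Nat.le_induction with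
    | base => exact le_refl _
    | succ n hn ih => exact le_trans (hdec n (le_trans ha hn)) ih
  have hν_le1 : ∀ m, 1 ≤ m → ν m ≤ 1 := by
    intro m hm
    rw [← hν1]; exact hanti 1 m le_rfl hm
  -- S nonempty
  have hSne : {m : ℕ | 1 ≤ m ∧ ν m ≤ f m}.Nonempty := by
    refine ⟨N, hN, ?_⟩
    have h1 : ν N ≤ 1 := hν_le1 N hN
    have h2 : (1:ℝ) ≤ f N := by
      rw [hf]
      rw [show (1:ℝ) = Real.sqrt 1 by simp]
      apply Real.sqrt_le_sqrt
      rw [le_div_iff₀ hNpos, one_mul]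
      calc (N:ℝ) = (N:ℝ)^1 := (pow_one _).symm
        _ ≤ (N:ℝ)^d := pow_le_pow_right₀ (by exact_mod_cast hN) hd
    linarith
  have hmem : mstar ∈ {m : ℕ | 1 ≤ m ∧ ν m ≤ f m} := hmstar ▸ Nat.sInf_mem hSne
  have hm1 : 1 ≤ mstar := hmem.1
  have hmle : ν mstar ≤ f mstar := hmem.2
  have hnot : ∀ m, m < mstar → ¬(1 ≤ m ∧ ν m ≤ f m) := by
    intro m hm
    exact Nat.notMem_of_lt_sInf (hmstar ▸ hm)
  -- E bdd above and nonempty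
  set E := {e : ℝ | ∃ m : ℕ, 1 ≤ m ∧ e = min (ν m) (f m)} with hE
  have hEne : E.Nonempty := ⟨min (ν 1) (f 1), 1, le_rfl, rfl⟩
  have hEbdd : BddAbove E := by
    refine ⟨1, ?_⟩
    rintro e ⟨m, hm, rfl⟩
    exact le_trans (min_le_left _ _) (hν_le1 m hm)
  have hfnonneg : ∀ m : ℕ, 0 ≤ f m := fun m => Real.sqrt_nonneg _
  have hub : epsstar ≤ f mstar := by
    rw [hepsstar]
    apply csSup_le hEne
    rintro e ⟨m, hm, rfl⟩
    rcases le_or_gt mstar m with h | h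
    · exact le_trans (min_le_left _ _) (le_trans (hanti mstar m hm1 h) hmle)
    · have := hnot m h
      push_neg at this
      have hfν : f m < ν m := this hm
      exact le_trans (min_le_right _ _) (hfmono m mstar h.le)
  have hpow1 : (1:ℝ) ≤ (2:ℝ) ^ ((d:ℝ)/2) :=
    Real.one_le_rpow (by norm_num) (by positivity)
  have hsqrt2d : Real.sqrt ((2:ℝ)^d) = (2:ℝ) ^ ((d:ℝ)/2) := by
    rw [show ((2:ℝ)^d) = (2:ℝ) ^ (d:ℝ) by rw [Real.rpow_natCast],
      Real.rpow_natCast, ← Real.rpow_natCast, Real.sqrt_eq_rpow, ← Real.rpow_mul (by norm_num)]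
    ring_nf
  refine ⟨hub, ?_⟩
  rcases eq_or_lt_of_le hm1 with h1 | h2
  · -- mstar = 1
    have hfle : f mstar ≤ epsstar := by
      have hmemE : min (ν 1) (f 1) ∈ E := ⟨1, le_rfl, rfl⟩
      have hf1 : f 1 ≤ 1 := by
        rw [hf]
        rw [show (1:ℝ) = Real.sqrt 1 by simp]
        apply Real.sqrt_le_sqrt
        rw [div_le_one hNpos]
        simp
        exact_mod_cast hN
      have : min (ν 1) (f 1) = f 1 := by rw [hν1]; exact min_eq_right hf1
      rw [hepsstar, ← h1]
      calc f 1 = min (ν 1) (f 1) := this.symm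
        _ ≤ sSup E := le_csSup hEbdd hmemE
    have heps0 : 0 ≤ epsstar := le_trans (hfnonneg mstar) hfle
    calc f mstar ≤ epsstar := hfle
      _ = 1 * epsstar := (one_mul _).symm
      _ ≤ (2:ℝ) ^ ((d:ℝ)/2) * epsstar := by nlinarith
  · -- mstar ≥ 2
    obtain ⟨k, hk⟩ : ∃ k, mstar = k + 1 := ⟨mstar - 1, by omega⟩
    have hk1 : 1 ≤ k := by omega
    have hklt : k < mstar := by omega
    have hfk : f k < ν k := by
      have := hnot k hklt; push_neg at this
      exact this hk1
    have hfke : f k ≤ epsstar := by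
      have hmemE : min (ν k) (f k) ∈ E := ⟨k, hk1, rfl⟩
      rw [hepsstar]
      calc f k = min (ν k) (f k) := (min_eq_right hfk.le).symm
        _ ≤ sSup E := le_csSup hEbdd hmemE
    have key : f mstar ≤ (2:ℝ) ^ ((d:ℝ)/2) * f k := by
      rw [hf, ← hsqrt2d]
      simp only
      rw [← Real.sqrt_mul (by positivity)]
      apply Real.sqrt_le_sqrt
      rw [hk]
      have hle : ((k:ℝ) + 1) ^ d ≤ (2:ℝ)^d * (k:ℝ)^d := by
        rw [← mul_pow]
        apply pow_le_pow_left₀ (by positivity)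
        have : (1:ℝ) ≤ (k:ℝ) := by exact_mod_cast hk1
        linarith
      push_cast
      rw [← mul_div_assoc]
      gcongr
    calc f mstar ≤ (2:ℝ) ^ ((d:ℝ)/2) * f k := key
      _ ≤ (2:ℝ) ^ ((d:ℝ)/2) * epsstar := by
          apply mul_le_mul_of_nonneg_left hfke (by positivity)
end

section
/- Let $\Sigma, \Sigma' \in \mathbb{R}^{p \times p}$ be symmetric positive definite matrices with $\lambda_{\min}(\Sigma') \geq 3/4$, and suppose every eigenvalue of $(\Sigma')^{-1/2}\Sigma(\Sigma')^{-1/2} - I$ lies in $[-1/2, 1/2]$. Then the Kullback–Leibler divergence satisfies $D_{\mathrm{KL}}(\mathcal{N}(0,\Sigma)\,\|\,\mathcal{N}(0,\Sigma')) \leq \frac{16}{9}\|\Sigma - \Sigma'\|_F^2$, where $\|\cdot\|_F$ denotes the Frobenius norm. -/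
section

open scoped ComplexOrder

/-- The positive semidefinite square root of a positive semidefinite matrix
(the definition of `Matrix.PosSemidef.sqrt` in the older Mathlib, since removed). -/
noncomputable def Matrix.PosSemidef.sqrt {n : Type*} [Fintype n] [DecidableEq n] {𝕜 : Type*}
    [RCLike 𝕜] {A : Matrix n n 𝕜} (hA : A.PosSemidef) : Matrix n n 𝕜 :=
  (hA.1.eigenvectorUnitary : Matrix n n 𝕜) *
    Matrix.diagonal (((↑) : ℝ → 𝕜) ∘ Real.sqrt ∘ hA.1.eigenvalues) *
    (star hA.1.eigenvectorUnitary : Matrix n n 𝕜)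

end

/-!
Whitening by `S = Σ'^{1/2}` turns the divergence into `½ ∑ⱼ (αⱼ - log (αⱼ + 1))`, where the `αⱼ`
are the eigenvalues of `M = S⁻¹ Σ S⁻¹ - 1`; since `x - log (x + 1) ≤ 2x²` for `x ≥ -1/2`, it is at
most `tr (M²) = tr (Σ'⁻¹ Δ Σ'⁻¹ Δ)` with `Δ = Σ - Σ'`. In an orthonormal eigenbasis of `Σ'`, with
eigenvalues `μᵢ ≥ 3/4`, this trace is `∑ᵢⱼ Cᵢⱼ² / (μᵢ μⱼ) ≤ (4/3)² ∑ᵢⱼ Cᵢⱼ²` for `C = Uᵀ Δ U`, and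
the Frobenius norm is invariant under the orthogonal change of basis.
-/

lemma Real.sub_log_add_one_le_two_mul_sq {x : ℝ} (hx : -(1 / 2) ≤ x) :
    x - Real.log (x + 1) ≤ 2 * x ^ 2 := by
  have hpos : 0 < x + 1 := by linarith
  have hlog := Real.one_sub_inv_le_log_of_pos hpos
  have hsq : x - (1 - (x + 1)⁻¹) = x ^ 2 / (x + 1) := by field_simp; ring
  have hle : x ^ 2 / (x + 1) ≤ 2 * x ^ 2 := by
    rw [div_le_iff₀ hpos]
    nlinarith [sq_nonneg x]
  linarith

namespace Matrix

open scoped ComplexOrder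

variable {n : Type*} [Fintype n] [DecidableEq n]

section RCLike

variable {𝕜 : Type*} [RCLike 𝕜] {A : Matrix n n 𝕜}

lemma PosSemidef.isHermitian_sqrt (hA : A.PosSemidef) : hA.sqrt.IsHermitian := by
  rw [PosSemidef.sqrt, star_eq_conjTranspose]
  exact isHermitian_mul_mul_conjTranspose _ (isHermitian_diagonal_of_self_adjoint _ (by ext; simp))

lemma PosSemidef.sqrt_mul_self (hA : A.PosSemidef) : hA.sqrt * hA.sqrt = A := by
  conv_rhs => rw [hA.1.spectral_theorem, Unitary.conjStarAlgAut_apply]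
  simp only [PosSemidef.sqrt, mul_assoc]
  rw [← mul_assoc (star _) (hA.1.eigenvectorUnitary : Matrix n n 𝕜),
    Unitary.star_mul_self_of_mem hA.1.eigenvectorUnitary.2, one_mul, ← mul_assoc (diagonal _),
    diagonal_mul_diagonal]
  congr 3
  ext i
  simp [← RCLike.ofReal_mul, Real.mul_self_sqrt (hA.eigenvalues_nonneg i)]

lemma IsHermitian.trace_cfc (hA : A.IsHermitian) (f : ℝ → ℝ) :
    (cfc f A).trace = ∑ i, (f (hA.eigenvalues i) : 𝕜) := by
  rw [hA.cfc_eq, IsHermitian.cfc, Unitary.conjStarAlgAut_apply, trace_mul_cycle,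
    Unitary.coe_star_mul_self, one_mul, trace_diagonal]
  rfl

lemma IsHermitian.det_cfc (hA : A.IsHermitian) (f : ℝ → ℝ) :
    (cfc f A).det = ∏ i, (f (hA.eigenvalues i) : 𝕜) := by
  rw [hA.cfc_eq, IsHermitian.cfc, Unitary.conjStarAlgAut_apply, det_mul, det_mul,
    mul_right_comm, ← det_mul, Unitary.mul_star_self_of_mem hA.eigenvectorUnitary.2, det_one,
    one_mul, det_diagonal]
  rfl

end RCLike

lemma IsHermitian.trace_sub_log_det_add_one_le {M : Matrix n n ℝ} (hM : M.IsHermitian)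
    (hspec : ∀ μ ∈ spectrum ℝ M, -(1 / 2) ≤ μ) :
    M.trace - Real.log (M + 1).det ≤ 2 * (M * M).trace := by
  have hα i : -(1 / 2) ≤ hM.eigenvalues i := hspec _ (hM.eigenvalues_mem_spectrum_real i)
  have htrace : M.trace = ∑ i, hM.eigenvalues i := by simpa using hM.trace_eq_sum_eigenvalues
  have hdet : (M + 1).det = ∏ i, (hM.eigenvalues i + 1) := by
    have h := hM.det_cfc (· + 1)
    rw [cfc_add_const (1 : ℝ) (fun x : ℝ ↦ x) M (ha := hM.isSelfAdjoint),
      cfc_id' ℝ M hM.isSelfAdjoint, map_one] at h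
    simpa using h
  have hsq : (M * M).trace = ∑ i, hM.eigenvalues i ^ 2 := by
    have h := hM.trace_cfc (· ^ 2)
    rw [cfc_pow_id (R := ℝ) M 2 hM.isSelfAdjoint, sq] at h
    simpa using h
  rw [htrace, hdet, hsq, Real.log_prod (fun i _ ↦ by linarith [hα i]), ← Finset.sum_sub_distrib,
    Finset.mul_sum]
  exact Finset.sum_le_sum fun i _ ↦ Real.sub_log_add_one_le_two_mul_sq (hα i)

section Congruence

variable {R : Type*} [Field R] {S P : Matrix n n R}

lemma inv_mul_inv_of_mul_self_eq (h : S * S = P) : S⁻¹ * S⁻¹ = P⁻¹ := by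
  rw [← h, mul_inv_rev]

lemma trace_inv_mul_mul_inv_of_mul_self_eq (h : S * S = P) (X : Matrix n n R) :
    (S⁻¹ * X * S⁻¹).trace = (P⁻¹ * X).trace := by
  rw [trace_mul_cycle, inv_mul_inv_of_mul_self_eq h]

lemma det_inv_mul_mul_inv_of_mul_self_eq (h : S * S = P) (X : Matrix n n R) :
    (S⁻¹ * X * S⁻¹).det = X.det / P.det := by
  rw [det_mul, det_mul, det_nonsing_inv, ← h, det_mul, Ring.inverse_eq_inv', div_eq_mul_inv,
    mul_inv]
  ring

lemma inv_mul_mul_inv_of_mul_self_eq (h : S * S = P) (hP : IsUnit P) : S⁻¹ * P * S⁻¹ = 1 := by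
  have hS : IsUnit S.det := (isUnit_iff_isUnit_det S).mp (isUnit_of_mul_isUnit_left (h ▸ hP))
  rw [← h, mul_assoc, mul_assoc, mul_nonsing_inv S hS, mul_one, nonsing_inv_mul S hS]

end Congruence

omit [DecidableEq n] in
lemma sum_sq_eq_trace_mul_transpose {R : Type*} [CommSemiring R] (A : Matrix n n R) :
    ∑ i, ∑ j, A i j ^ 2 = (A * Aᵀ).trace := by
  simp [trace, mul_apply, sq]

lemma trace_diagonal_mul_mul_diagonal_mul {R : Type*} [CommSemiring R] (d e : n → R)
    (C : Matrix n n R) :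
    (diagonal d * C * diagonal e * C).trace = ∑ i, ∑ j, d i * e j * C i j * C j i := by
  refine Finset.sum_congr rfl fun i _ ↦ ?_
  rw [diag_apply, mul_apply]
  refine Finset.sum_congr rfl fun j _ ↦ ?_
  rw [mul_diagonal, diagonal_mul]
  ring

lemma sum_sq_star_mul_mul_of_mem_unitaryGroup {U : Matrix n n ℝ} (hU : U ∈ unitaryGroup n ℝ)
    (A : Matrix n n ℝ) : ∑ i, ∑ j, (star U * A * U) i j ^ 2 = ∑ i, ∑ j, A i j ^ 2 := by
  have hUUt : U * Uᵀ = 1 := by simpa [star_eq_conjTranspose] using mem_unitaryGroup_iff.mp hU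
  have hconj : star U * A * U * (star U * A * U)ᵀ = Uᵀ * (A * Aᵀ) * U := by
    simp only [star_eq_conjTranspose, conjTranspose_eq_transpose_of_trivial, transpose_mul,
      transpose_transpose, mul_assoc]
    rw [← mul_assoc U Uᵀ, hUUt, one_mul]
  rw [sum_sq_eq_trace_mul_transpose, sum_sq_eq_trace_mul_transpose, hconj, trace_mul_cycle, hUUt,
    one_mul]

lemma IsHermitian.trace_inv_mul_mul_inv_mul_le {P A : Matrix n n ℝ} (hP : P.IsHermitian)
    (hA : A.IsHermitian) {c : ℝ} (hc : 0 < c) (hPc : ∀ μ ∈ spectrum ℝ P, c ≤ μ) :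
    (P⁻¹ * A * P⁻¹ * A).trace ≤ (c ^ 2)⁻¹ * ∑ i, ∑ j, A i j ^ 2 := by
  set U : Matrix n n ℝ := (hP.eigenvectorUnitary : Matrix n n ℝ)
  set μ := hP.eigenvalues
  have hμ i : c ≤ μ i := hPc _ (hP.eigenvalues_mem_spectrum_real i)
  have hPunit : IsUnit P := (spectrum.zero_notMem_iff ℝ).mp fun h0 ↦ (hPc 0 h0).not_gt hc
  set D := diagonal (fun i ↦ (μ i)⁻¹)
  have hPinv : P⁻¹ = U * D * star U := by
    rw [nonsing_inv_eq_ringInverse, ← cfc_ringInverse_id (R := ℝ) P hPunit hP.isSelfAdjoint,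
      hP.cfc_eq, IsHermitian.cfc, Unitary.conjStarAlgAut_apply]
    rfl
  set C := star U * A * U
  have hCH : C.IsHermitian := isHermitian_conjTranspose_mul_mul U hA
  have hC i j : C j i = C i j := by simpa using hCH.apply i j
  have htrace : (P⁻¹ * A * P⁻¹ * A).trace = (D * C * D * C).trace := by
    have h : U * D * star U * A * (U * D * star U) * A = U * (D * C * D * (star U * A)) := by
      simp only [C, mul_assoc]
    rw [hPinv, h, trace_mul_comm]
    simp only [C, mul_assoc]
  rw [htrace, trace_diagonal_mul_mul_diagonal_mul,
    ← sum_sq_star_mul_mul_of_mem_unitaryGroup hP.eigenvectorUnitary.2 A, Finset.mul_sum]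
  refine Finset.sum_le_sum fun i _ ↦ ?_
  rw [Finset.mul_sum]
  refine Finset.sum_le_sum fun j _ ↦ ?_
  calc (μ i)⁻¹ * (μ j)⁻¹ * C i j * C j i = (μ i)⁻¹ * (μ j)⁻¹ * C i j ^ 2 := by rw [hC]; ring
    _ ≤ c⁻¹ * c⁻¹ * C i j ^ 2 := by
      gcongr
      exacts [inv_nonneg.mpr (hc.le.trans (hμ j)), hμ i, hμ j]
    _ = (c ^ 2)⁻¹ * C i j ^ 2 := by ring

end Matrix

theorem kl_gaussian_le_frobenius (p : ℕ)
    (Sig Sig' : Matrix (Fin p) (Fin p) ℝ)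
    (hSig : Sig.PosDef) (hSig' : Sig'.PosDef)
    (hmin : ∀ μ ∈ spectrum ℝ Sig', (3 / 4 : ℝ) ≤ μ)
    (heig : ∀ μ ∈ spectrum ℝ
        ((hSig'.posSemidef.sqrt)⁻¹ * Sig * (hSig'.posSemidef.sqrt)⁻¹ - 1),
      μ ∈ Set.Icc (-(1 / 2) : ℝ) (1 / 2)) :
    (1 / 2) * ((Sig'⁻¹ * Sig - 1).trace - Real.log (Sig.det / Sig'.det))
      ≤ (16 / 9) * ∑ i, ∑ j, (Sig i j - Sig' i j) ^ 2 := by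
  set S := hSig'.posSemidef.sqrt
  have hSS : S * S = Sig' := hSig'.posSemidef.sqrt_mul_self
  set M := S⁻¹ * Sig * S⁻¹ - 1
  have hM_eq : M = S⁻¹ * (Sig - Sig') * S⁻¹ := by
    rw [mul_sub, sub_mul, Matrix.inv_mul_mul_inv_of_mul_self_eq hSS hSig'.isUnit]
  have hM : M.IsHermitian := by
    have h := Matrix.isHermitian_conjTranspose_mul_mul S⁻¹ (hSig.1.sub hSig'.1)
    rwa [hSig'.posSemidef.isHermitian_sqrt.inv.eq, ← hM_eq] at h
  have htrace : (Sig'⁻¹ * Sig - 1).trace = M.trace := by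
    rw [Matrix.trace_sub, Matrix.trace_sub, Matrix.trace_inv_mul_mul_inv_of_mul_self_eq hSS]
  have hdet : Sig.det / Sig'.det = (M + 1).det := by
    rw [sub_add_cancel, Matrix.det_inv_mul_mul_inv_of_mul_self_eq hSS]
  have hsq : (M * M).trace = (Sig'⁻¹ * (Sig - Sig') * Sig'⁻¹ * (Sig - Sig')).trace := by
    have h : M * M = S⁻¹ * ((Sig - Sig') * (S⁻¹ * S⁻¹) * (Sig - Sig')) * S⁻¹ := by
      simp only [hM_eq, mul_assoc]
    rw [h, Matrix.trace_inv_mul_mul_inv_of_mul_self_eq hSS,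
      Matrix.inv_mul_inv_of_mul_self_eq hSS, mul_assoc, mul_assoc, mul_assoc]
  have hKL := hM.trace_sub_log_det_add_one_le fun μ hμ ↦ (heig μ hμ).1
  rw [htrace, hdet]
  calc (1 / 2) * (M.trace - Real.log (M + 1).det)
      ≤ (Sig'⁻¹ * (Sig - Sig') * Sig'⁻¹ * (Sig - Sig')).trace := by linarith
    _ ≤ ((3 / 4 : ℝ) ^ 2)⁻¹ * ∑ i, ∑ j, (Sig - Sig') i j ^ 2 :=
      hSig'.1.trace_inv_mul_mul_inv_mul_le (hSig.1.sub hSig'.1) (by norm_num) hmin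
    _ = (16 / 9) * ∑ i, ∑ j, (Sig i j - Sig' i j) ^ 2 := by norm_num [Matrix.sub_apply]
end
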